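/- arXiv:1904.11684 — 6 statements merged into one kernel-verified Lean document; each statement's English description precedes it below -/
import Mathlib

section
/- Let T₁, T₂ : H → H be firmly nonexpansive, let C : H → H be β-cocoercive with β > 0, and let γ ∈ (0, 2β). Then the operator T := I - T₂ + T₁ ∘ (2T₂ - I - γ C ∘ T₂) is α-averaged with α = 2β/(4β - γ) < 1. -/
/-!
Write `e = (T - I)u - (T - I)v` and `k = (4β - γ) / (2β) = α⁻¹`. The map `S = I + k (T - I)`
satisfies `T = (1 - α) I + α S`, and `S` is nonexpansive as soon as `2⟪u - v, e⟫ + k ‖e‖² ≤ 0`.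
Firm nonexpansiveness of `T₁` and `T₂`, in the form `‖Tu - Tv‖² ≤ ⟪u - v, Tu - Tv⟫`, bounds
`⟪u - v, e⟫` by `-‖e‖² - γ ⟪c, a⟫`, where `a` is the increment of `T₁` and `c` that of `C ∘ T₂`;
cocoercivity of `C` and `0 ≤ ‖e + 2β c‖²` bound `-4β ⟪c, a⟫` by `‖e‖²`, and
`k = 2 - γ / (2β)` is exactly what these two bounds afford.
-/

open RealInnerProductSpace

section

variable {H : Type*} [NormedAddCommGroup H] [InnerProductSpace ℝ H]

def FirmlyNonexpansive (T : H → H) : Prop :=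
  ∀ u v, ‖T u - T v‖ ^ 2 ≤ ‖u - v‖ ^ 2 - ‖(u - T u) - (v - T v)‖ ^ 2

theorem FirmlyNonexpansive.norm_sub_sq_le_inner {T : H → H} (hT : FirmlyNonexpansive T)
    (u v : H) : ‖T u - T v‖ ^ 2 ≤ ⟪u - v, T u - T v⟫ := by
  have h := hT u v
  rw [show (u - T u) - (v - T v) = (u - v) - (T u - T v) by abel,
    norm_sub_sq_real (u - v)] at h
  linarith

theorem exists_nonexpansive_averaged_of_inner_le {T : H → H} {k : ℝ} (hk : 0 < k)
    (hT : ∀ u v, 2 * ⟪u - v, (T u - u) - (T v - v)⟫ + k * ‖(T u - u) - (T v - v)‖ ^ 2 ≤ 0) :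
    ∃ S : H → H, (∀ u v, ‖S u - S v‖ ≤ ‖u - v‖) ∧ ∀ x, T x = (1 - k⁻¹) • x + k⁻¹ • S x := by
  refine ⟨fun x ↦ x + k • (T x - x), fun u v ↦ ?_, fun x ↦ ?_⟩
  · have hsq : ‖(u + k • (T u - u)) - (v + k • (T v - v))‖ ^ 2 =
        ‖u - v‖ ^ 2 + k * (2 * ⟪u - v, (T u - u) - (T v - v)⟫
          + k * ‖(T u - u) - (T v - v)‖ ^ 2) := by
      rw [show (u + k • (T u - u)) - (v + k • (T v - v))
          = (u - v) + k • ((T u - u) - (T v - v)) by module,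
        norm_add_sq_real, real_inner_smul_right, norm_smul, Real.norm_of_nonneg hk.le]
      ring
    refine sq_le_sq₀ (norm_nonneg _) (norm_nonneg _) |>.mp ?_
    rw [hsq]
    exact add_le_of_nonpos_right (mul_nonpos_of_nonneg_of_nonpos hk.le (hT u v))
  · rw [smul_add, smul_smul, inv_mul_cancel₀ hk.ne', one_smul]
    module

theorem two_inner_add_div_mul_norm_sq_nonpos {β γ : ℝ} (hβ : 0 < β) (hγ : 0 < γ)
    {d a b c : H} (hb : ‖b‖ ^ 2 ≤ ⟪d, b⟫) (ha : ‖a‖ ^ 2 ≤ ⟪(2 : ℝ) • b - d - γ • c, a⟫)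
    (hc : β * ‖c‖ ^ 2 ≤ ⟪b, c⟫) :
    2 * ⟪d, a - b⟫ + (4 * β - γ) / (2 * β) * ‖a - b‖ ^ 2 ≤ 0 := by
  have hsq : 0 ≤ ‖(a - b) + (2 * β) • c‖ ^ 2 := sq_nonneg _
  rw [norm_add_sq_real, real_inner_smul_right, norm_smul, Real.norm_of_nonneg (by positivity),
    inner_sub_left, norm_sub_sq_real] at hsq
  rw [inner_sub_left, inner_sub_left, real_inner_smul_left, real_inner_smul_left,
    real_inner_comm a b, real_inner_comm a c] at ha
  rw [inner_sub_right, norm_sub_sq_real]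
  have key : 4 * β * (⟪d, a⟫ - ⟪d, b⟫) + (4 * β - γ) * (‖a‖ ^ 2 - 2 * ⟪a, b⟫ + ‖b‖ ^ 2) ≤ 0 := by
    linear_combination (4 * β) * ha + (4 * β) * hb + (4 * β * γ) * hc + γ * hsq
  calc _ = (4 * β * (⟪d, a⟫ - ⟪d, b⟫) + (4 * β - γ) * (‖a‖ ^ 2 - 2 * ⟪a, b⟫ + ‖b‖ ^ 2))
        / (2 * β) := by field_simp; ring
    _ ≤ 0 := div_nonpos_of_nonpos_of_nonneg key (by positivity)

end

theorem three_operator_averaged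
    {H : Type*} [NormedAddCommGroup H] [InnerProductSpace ℝ H]
    (T₁ T₂ C : H → H) (β γ : ℝ) (hβ : 0 < β) (hγ : γ ∈ Set.Ioo (0 : ℝ) (2 * β))
    (hT₁ : ∀ u v : H, ‖T₁ u - T₁ v‖ ^ 2 ≤ ‖u - v‖ ^ 2 - ‖(u - T₁ u) - (v - T₁ v)‖ ^ 2)
    (hT₂ : ∀ u v : H, ‖T₂ u - T₂ v‖ ^ 2 ≤ ‖u - v‖ ^ 2 - ‖(u - T₂ u) - (v - T₂ v)‖ ^ 2)
    (hC : ∀ x y : H, β * ‖C x - C y‖ ^ 2 ≤ (inner ℝ (x - y) (C x - C y) : ℝ))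
    (T : H → H)
    (hT : ∀ x : H, T x = x - T₂ x + T₁ ((2 : ℝ) • T₂ x - x - γ • C (T₂ x))) :
    (2 * β / (4 * β - γ) < 1) ∧
    ∃ S : H → H, (∀ u v, ‖S u - S v‖ ≤ ‖u - v‖) ∧
      ∀ x, T x = (1 - 2 * β / (4 * β - γ)) • x + (2 * β / (4 * β - γ)) • S x := by
  obtain ⟨hγ0, hγ2β⟩ := hγ
  refine ⟨(div_lt_one (by linarith)).mpr (by linarith), ?_⟩
  rw [← inv_div]
  refine exists_nonexpansive_averaged_of_inner_le (div_pos (by linarith) (by linarith))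
    fun u v ↦ ?_
  set z : H → H := fun x ↦ (2 : ℝ) • T₂ x - x - γ • C (T₂ x)
  have he : (T u - u) - (T v - v) = (T₁ (z u) - T₁ (z v)) - (T₂ u - T₂ v) := by
    rw [hT, hT]; abel
  have hz : z u - z v = (2 : ℝ) • (T₂ u - T₂ v) - (u - v) - γ • (C (T₂ u) - C (T₂ v)) := by
    simp only [z]; module
  rw [he]
  refine two_inner_add_div_mul_norm_sq_nonpos hβ hγ0
    (FirmlyNonexpansive.norm_sub_sq_le_inner hT₂ u v) ?_ (hC (T₂ u) (T₂ v))
  rw [← hz]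
  exact FirmlyNonexpansive.norm_sub_sq_le_inner hT₁ (z u) (z v)
end

section
/- Let T₁, T₂ : H → H be firmly nonexpansive, let C : H → H be β-cocoercive with β > 0. Let ε̄ ∈ (0,1), γ ∈ (0, 2βε̄), and set ᾱ = 1/(2 - ε̄). Then T := I - T₂ + T₁ ∘ (2T₂ - I - γ C ∘ T₂) satisfies, for all x, y ∈ H: ‖Tx - Ty‖² ≤ ‖x - y‖² - ((1-ᾱ)/ᾱ)‖(I-T)x - (I-T)y‖² - γ(2β - γ/ε̄)‖C(T₂x) - C(T₂y)‖². -/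
/-!
Write `d = x - y`, `p = T₂ x - T₂ y`, `c = C (T₂ x) - C (T₂ y)` and `q` for the difference of the
`T₁`-values, so that `T x - T y = d - (p - q)` and `(I - T) x - (I - T) y = p - q`. Firm
nonexpansiveness of `T₁` and `T₂` in the inner-product form `‖T u - T v‖² ≤ ⟪u - v, T u - T v⟫`
bounds `‖T x - T y‖²` by `‖d‖² - ‖p - q‖² - 2γ⟪q, c⟫`; cocoercivity replaces `2γβ‖c‖²` by
`2γ⟪p, c⟫`, and the remaining cross term `2γ⟪p - q, c⟫` is absorbed by Young's inequality
`2⟪a, b⟫ ≤ ε‖a‖² + ‖b‖² / ε`.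
-/

open RealInnerProductSpace

section

variable {H : Type*} [NormedAddCommGroup H] [InnerProductSpace ℝ H]

theorem sq_norm_le_inner_of_sq_norm_le_sub {a b : H} (h : ‖b‖ ^ 2 ≤ ‖a‖ ^ 2 - ‖a - b‖ ^ 2) :
    ‖b‖ ^ 2 ≤ ⟪a, b⟫ := by
  rw [norm_sub_sq_real] at h
  linarith

theorem sq_norm_sub_le_inner_of_firmlyNonexpansive {T : H → H}
    (hT : ∀ u v : H, ‖T u - T v‖ ^ 2 ≤ ‖u - v‖ ^ 2 - ‖(u - T u) - (v - T v)‖ ^ 2) (u v : H) :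
    ‖T u - T v‖ ^ 2 ≤ ⟪u - v, T u - T v⟫ := by
  apply sq_norm_le_inner_of_sq_norm_le_sub
  simpa only [sub_sub_sub_comm] using hT u v

theorem two_mul_inner_le_mul_sq_norm_add_sq_norm_div (a b : H) {ε : ℝ} (hε : 0 < ε) :
    2 * ⟪a, b⟫ ≤ ε * ‖a‖ ^ 2 + ‖b‖ ^ 2 / ε := by
  have hsq : 0 ≤ ‖ε • a - b‖ ^ 2 := by positivity
  rw [norm_sub_sq_real, norm_smul, real_inner_smul_left, Real.norm_of_nonneg hε.le] at hsq
  rw [← sub_nonneg]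
  have key : ε * ‖a‖ ^ 2 + ‖b‖ ^ 2 / ε - 2 * ⟪a, b⟫
      = ((ε * ‖a‖) ^ 2 - 2 * (ε * ⟪a, b⟫) + ‖b‖ ^ 2) / ε := by
    field_simp
    ring
  rw [key]
  positivity

theorem sq_norm_sub_add_le {d p q c : H} {β γ ε : ℝ} (hγ : 0 ≤ γ) (hε : 0 < ε)
    (hp : ‖p‖ ^ 2 ≤ ⟪d, p⟫) (hq : ‖q‖ ^ 2 ≤ ⟪(2 : ℝ) • p - d - γ • c, q⟫)
    (hc : β * ‖c‖ ^ 2 ≤ ⟪p, c⟫) :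
    ‖d - p + q‖ ^ 2 ≤ ‖d‖ ^ 2 - (1 - ε) * ‖p - q‖ ^ 2 - γ * (2 * β - γ / ε) * ‖c‖ ^ 2 := by
  have young := two_mul_inner_le_mul_sq_norm_add_sq_norm_div (p - q) (γ • c) hε
  have hγc := mul_le_mul_of_nonneg_left hc hγ
  rw [inner_sub_left, inner_sub_left, real_inner_smul_left, real_inner_smul_left,
    real_inner_comm q c] at hq
  rw [real_inner_smul_right, inner_sub_left, norm_smul, Real.norm_of_nonneg hγ] at young
  rw [show d - p + q = d - (p - q) by abel, norm_sub_sq_real, inner_sub_right,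
    norm_sub_sq_real p q]
  rw [norm_sub_sq_real p q] at young
  have hcoef : (γ * ‖c‖) ^ 2 / ε = γ * (γ / ε) * ‖c‖ ^ 2 := by ring
  linarith

end

theorem three_operator_inequality_general
    {H : Type*} [NormedAddCommGroup H] [InnerProductSpace ℝ H]
    (T₁ T₂ C : H → H) (β γ ε : ℝ) (hε : ε ∈ Set.Ioo (0 : ℝ) 1)
    (hγ : γ ∈ Set.Ioo (0 : ℝ) (2 * β * ε))
    (hT₁ : ∀ u v : H, ‖T₁ u - T₁ v‖ ^ 2 ≤ ‖u - v‖ ^ 2 - ‖(u - T₁ u) - (v - T₁ v)‖ ^ 2)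
    (hT₂ : ∀ u v : H, ‖T₂ u - T₂ v‖ ^ 2 ≤ ‖u - v‖ ^ 2 - ‖(u - T₂ u) - (v - T₂ v)‖ ^ 2)
    (hC : ∀ x y : H, β * ‖C x - C y‖ ^ 2 ≤ (inner ℝ (x - y) (C x - C y) : ℝ))
    (T : H → H)
    (hT : ∀ x : H, T x = x - T₂ x + T₁ ((2 : ℝ) • T₂ x - x - γ • C (T₂ x))) :
    ∀ x y : H, ‖T x - T y‖ ^ 2 ≤ ‖x - y‖ ^ 2
      - ((1 - 1 / (2 - ε)) / (1 / (2 - ε))) * ‖(x - T x) - (y - T y)‖ ^ 2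
      - γ * (2 * β - γ / ε) * ‖C (T₂ x) - C (T₂ y)‖ ^ 2 := by
  intro x y
  have hcoef : (1 - 1 / (2 - ε)) / (1 / (2 - ε)) = 1 - ε := by
    have : 2 - ε ≠ 0 := by linarith [hε.2]
    field_simp
    ring
  set z : H → H := fun w ↦ (2 : ℝ) • T₂ w - w - γ • C (T₂ w)
  have hz : z x - z y = (2 : ℝ) • (T₂ x - T₂ y) - (x - y) - γ • (C (T₂ x) - C (T₂ y)) := by
    simp only [z, smul_sub]
    abel
  have hTxy : T x - T y = (x - y) - (T₂ x - T₂ y) + (T₁ (z x) - T₁ (z y)) := by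
    rw [hT, hT]
    abel
  have hIT : (x - T x) - (y - T y) = (T₂ x - T₂ y) - (T₁ (z x) - T₁ (z y)) := by
    rw [hT, hT]
    abel
  rw [hTxy, hIT, hcoef]
  refine sq_norm_sub_add_le hγ.1.le hε.1 (sq_norm_sub_le_inner_of_firmlyNonexpansive hT₂ x y)
    ?_ (hC (T₂ x) (T₂ y))
  rw [← hz]
  exact sq_norm_sub_le_inner_of_firmlyNonexpansive hT₁ (z x) (z y)

theorem three_operator_inequality
    {H : Type*} [NormedAddCommGroup H] [InnerProductSpace ℝ H]
    (T₁ T₂ C : H → H) (β γ ε : ℝ) (hβ : 0 < β) (hε : ε ∈ Set.Ioo (0 : ℝ) 1)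
    (hγ : γ ∈ Set.Ioo (0 : ℝ) (2 * β * ε))
    (hT₁ : ∀ u v : H, ‖T₁ u - T₁ v‖ ^ 2 ≤ ‖u - v‖ ^ 2 - ‖(u - T₁ u) - (v - T₁ v)‖ ^ 2)
    (hT₂ : ∀ u v : H, ‖T₂ u - T₂ v‖ ^ 2 ≤ ‖u - v‖ ^ 2 - ‖(u - T₂ u) - (v - T₂ v)‖ ^ 2)
    (hC : ∀ x y : H, β * ‖C x - C y‖ ^ 2 ≤ (inner ℝ (x - y) (C x - C y) : ℝ))
    (T : H → H)
    (hT : ∀ x : H, T x = x - T₂ x + T₁ ((2 : ℝ) • T₂ x - x - γ • C (T₂ x))) :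
    ∀ x y : H, ‖T x - T y‖ ^ 2 ≤ ‖x - y‖ ^ 2
      - ((1 - 1 / (2 - ε)) / (1 / (2 - ε))) * ‖(x - T x) - (y - T y)‖ ^ 2
      - γ * (2 * β - γ / ε) * ‖C (T₂ x) - C (T₂ y)‖ ^ 2 :=
  three_operator_inequality_general T₁ T₂ C β γ ε hε hγ hT₁ hT₂ hC T hT
end

section
/- Let T : H → H be nonexpansive with Fix(T) ≠ ∅. Let {ρₖ} ⊂ (0,1) with 0 < ρ̲ ≤ ρₖ ≤ ρ̄ < 1 and {αₖ} ⊂ [0, α] with α < 1 such that ∑ₖ αₖ‖xᵏ - xᵏ⁻¹‖² < ∞. Define yᵏ = xᵏ + αₖ(xᵏ - xᵏ⁻¹) and xᵏ⁺¹ = (1-ρₖ)yᵏ + ρₖTyᵏ. Then for any x* ∈ Fix(T), the limit limₖ ‖xᵏ - x*‖ exists, and {xᵏ} converges weakly to a point in Fix(T). -/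
/-!
For a fixed point `p`, the squared distances `φ k = ‖x k - p‖²` satisfy the inertial descent
inequality `φ (k+2) - φ (k+1) + c ‖T y_k - y_k‖² ≤ α_k (φ (k+1) - φ k) + 2 α_k ‖x (k+1) - x k‖²`.
Since `α_k ≤ ᾱ < 1`, the positive parts of the increments of `φ` are summable, so `φ` converges
and the residuals `‖T y_k - y_k‖` are square summable. Hence `‖T x_k - x_k‖ → 0`, so by
demiclosedness every weak cluster point of the bounded sequence `x` is a fixed point, and Opial's
argument (two weak cluster points `z, z'` both have convergent distances, which forces
`⟪z - z', z - z'⟫ = 0`) gives weak convergence of the whole sequence.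
-/

/-- Weak convergence in a Hilbert space. -/
def WeakTendsto {H : Type*} [NormedAddCommGroup H] [InnerProductSpace ℝ H]
    (x : ℕ → H) (p : H) : Prop :=
  ∀ w : H, Filter.Tendsto (fun n => (inner ℝ (x n) w : ℝ)) Filter.atTop (nhds (inner ℝ p w))

open Filter Topology Finset InnerProductSpace

section RealSequences

theorem summable_of_le_mul_add {θ β : ℕ → ℝ} {a : ℝ} (ha₀ : 0 ≤ a) (ha₁ : a < 1)
    (hθ : ∀ k, 0 ≤ θ k) (hβ : Summable β) (hrec : ∀ k, θ (k + 1) ≤ a * θ k + β k) :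
    Summable θ := by
  obtain ⟨B, hB⟩ := hβ.hasSum.tendsto_sum_nat.bddAbove_range
  have hmono : ∀ n, ∑ i ∈ range n, θ i ≤ ∑ i ∈ range (n + 1), θ i := fun n => by
    rw [sum_range_succ]; linarith [hθ n]
  have hsucc : ∀ n, ∑ i ∈ range (n + 1), θ i ≤ a * ∑ i ∈ range (n + 1), θ i + B + θ 0 :=
    fun n => calc
      ∑ i ∈ range (n + 1), θ i = ∑ i ∈ range n, θ (i + 1) + θ 0 := sum_range_succ' _ _
      _ ≤ ∑ i ∈ range n, (a * θ i + β i) + θ 0 := by gcongr with i; exact hrec i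
      _ = a * ∑ i ∈ range n, θ i + ∑ i ∈ range n, β i + θ 0 := by
        rw [sum_add_distrib, mul_sum]
      _ ≤ a * ∑ i ∈ range (n + 1), θ i + B + θ 0 := by
        linarith [mul_le_mul_of_nonneg_left (hmono n) ha₀, hB ⟨n, rfl⟩]
  refine summable_of_sum_range_le hθ (c := (θ 0 + B) / (1 - a)) fun n => ?_
  rw [le_div_iff₀ (sub_pos.2 ha₁)]
  nlinarith [hsucc n, mul_le_mul_of_nonneg_left (hmono n) (sub_nonneg.2 ha₁.le)]

theorem exists_tendsto_of_sub_le_summable {φ θ : ℕ → ℝ} (hφ : BddBelow (Set.range φ))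
    (hθ : Summable θ) (h : ∀ k, φ (k + 1) - φ k ≤ θ k) : ∃ l, Tendsto φ atTop (𝓝 l) := by
  obtain ⟨m, hm⟩ := hφ
  obtain ⟨B, hB⟩ := hθ.hasSum.tendsto_sum_nat.bddAbove_range
  set g : ℕ → ℝ := fun k => φ k - ∑ i ∈ range k, θ i
  have hg : Antitone g := antitone_nat_of_succ_le fun k => by
    simp only [g, sum_range_succ]; linarith [h k]
  have hgbdd : BddBelow (Set.range g) := ⟨m - B, by
    rintro _ ⟨k, rfl⟩
    linarith [hm ⟨k, rfl⟩, hB ⟨k, rfl⟩]⟩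
  exact ⟨_, ((tendsto_atTop_ciInf hg hgbdd).add hθ.hasSum.tendsto_sum_nat).congr fun k => by
    simp [g]⟩

theorem summable_of_le_sub_succ_add {t φ u : ℕ → ℝ} (ht : ∀ k, 0 ≤ t k)
    (hφ : BddBelow (Set.range φ)) (hu : Summable u) (h : ∀ k, t k ≤ φ k - φ (k + 1) + u k) :
    Summable t := by
  obtain ⟨m, hm⟩ := hφ
  obtain ⟨B, hB⟩ := hu.hasSum.tendsto_sum_nat.bddAbove_range
  refine summable_of_sum_range_le ht (c := φ 0 - m + B) fun n => ?_
  calc ∑ k ∈ range n, t k ≤ ∑ k ∈ range n, (φ k - φ (k + 1) + u k) := sum_le_sum fun k _ => h k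
    _ = φ 0 - φ n + ∑ k ∈ range n, u k := by
      rw [sum_add_distrib, sum_range_sub']
    _ ≤ φ 0 - m + B := by linarith [hm ⟨n, rfl⟩, hB ⟨n, rfl⟩]

theorem exists_tendsto_and_summable_of_inertial_le {φ t α β : ℕ → ℝ} {a : ℝ}
    (hφ : BddBelow (Set.range φ)) (ht : ∀ k, 0 ≤ t k) (hα : ∀ k, 0 ≤ α k ∧ α k ≤ a)
    (ha : a < 1) (hβ₀ : ∀ k, 0 ≤ β k) (hβ : Summable β)
    (h : ∀ k, φ (k + 2) - φ (k + 1) + t k ≤ α k * (φ (k + 1) - φ k) + β k) :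
    (∃ l, Tendsto φ atTop (𝓝 l)) ∧ Summable t := by
  have ha₀ : 0 ≤ a := (hα 0).1.trans (hα 0).2
  set θ : ℕ → ℝ := fun k => max (φ (k + 1) - φ k) 0
  have hθ₀ : ∀ k, 0 ≤ θ k := fun k => le_max_right _ _
  have hαθ : ∀ k, α k * (φ (k + 1) - φ k) ≤ a * θ k := fun k =>
    (mul_le_mul_of_nonneg_left (le_max_left _ _) (hα k).1).trans
      (mul_le_mul_of_nonneg_right (hα k).2 (hθ₀ k))
  have hθ : Summable θ := summable_of_le_mul_add ha₀ ha hθ₀ hβ fun k =>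
    max_le (by linarith [h k, hαθ k, ht k]) (add_nonneg (mul_nonneg ha₀ (hθ₀ k)) (hβ₀ k))
  refine ⟨exists_tendsto_of_sub_le_summable hφ hθ fun k => le_max_left _ _, ?_⟩
  exact summable_of_le_sub_succ_add (φ := fun k => φ (k + 1)) ht
    (hφ.mono (Set.range_comp_subset_range _ φ)) ((hθ.mul_left a).add hβ) fun k => by
      linarith [h k, hαθ k]

end RealSequences

section HilbertSpace

variable {H : Type*} [NormedAddCommGroup H] [InnerProductSpace ℝ H]

theorem norm_one_sub_smul_add_smul_sq (ρ : ℝ) (a b : H) :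
    ‖(1 - ρ) • a + ρ • b‖ ^ 2 = (1 - ρ) * ‖a‖ ^ 2 + ρ * ‖b‖ ^ 2 - ρ * (1 - ρ) * ‖a - b‖ ^ 2 := by
  simp only [← real_inner_self_eq_norm_sq, inner_add_left, inner_add_right, inner_sub_left,
    inner_sub_right, real_inner_smul_left, real_inner_smul_right, real_inner_comm b a]
  ring

theorem norm_map_averaged_sub_averaged_le {T : H → H} (hT : ∀ u v, ‖T u - T v‖ ≤ ‖u - v‖)
    {ρ : ℝ} (hρ₀ : 0 ≤ ρ) (hρ₁ : ρ ≤ 1) (y : H) :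
    ‖T ((1 - ρ) • y + ρ • T y) - ((1 - ρ) • y + ρ • T y)‖ ≤ ‖T y - y‖ := by
  set z := (1 - ρ) • y + ρ • T y
  calc ‖T z - z‖ ≤ ‖T z - T y‖ + ‖T y - z‖ := norm_sub_le_norm_sub_add_norm_sub _ _ _
    _ ≤ ‖z - y‖ + ‖T y - z‖ := by gcongr; exact hT z y
    _ = ρ * ‖T y - y‖ + (1 - ρ) * ‖T y - y‖ := by
      rw [show z - y = ρ • (T y - y) by module, show T y - z = (1 - ρ) • (T y - y) by module,
        norm_smul, norm_smul, Real.norm_of_nonneg hρ₀, Real.norm_of_nonneg (sub_nonneg.2 hρ₁)]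
    _ = ‖T y - y‖ := by ring

theorem norm_inertial_averaged_sub_sq_le {T : H → H} (hT : ∀ u v, ‖T u - T v‖ ≤ ‖u - v‖)
    {p : H} (hp : T p = p) {ρ α : ℝ} (hρ : 0 ≤ ρ) {x₀ x₁ y : H}
    (hy : y = x₁ + α • (x₁ - x₀)) :
    ‖(1 - ρ) • y + ρ • T y - p‖ ^ 2 - ‖x₁ - p‖ ^ 2 + ρ * (1 - ρ) * ‖T y - y‖ ^ 2 ≤
      α * (‖x₁ - p‖ ^ 2 - ‖x₀ - p‖ ^ 2) + α * (1 + α) * ‖x₁ - x₀‖ ^ 2 := by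
  have hTy : ‖T y - p‖ ^ 2 ≤ ‖y - p‖ ^ 2 := by
    gcongr
    simpa [hp] using hT y p
  have hnext : ‖(1 - ρ) • y + ρ • T y - p‖ ^ 2 =
      (1 - ρ) * ‖y - p‖ ^ 2 + ρ * ‖T y - p‖ ^ 2 - ρ * (1 - ρ) * ‖T y - y‖ ^ 2 := by
    rw [show (1 - ρ) • y + ρ • T y - p = (1 - ρ) • (y - p) + ρ • (T y - p) by module,
      norm_one_sub_smul_add_smul_sq, sub_sub_sub_cancel_right, norm_sub_rev y (T y)]
  have hextra : ‖y - p‖ ^ 2 =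
      (1 + α) * ‖x₁ - p‖ ^ 2 - α * ‖x₀ - p‖ ^ 2 + α * (1 + α) * ‖x₁ - x₀‖ ^ 2 := by
    rw [show y - p = (1 - -α) • (x₁ - p) + (-α) • (x₀ - p) by rw [hy]; module,
      norm_one_sub_smul_add_smul_sq, sub_sub_sub_cancel_right]
    ring
  nlinarith [mul_le_mul_of_nonneg_left hTy hρ]

theorem inertialKM_tendsto_norm_sub_and_summable {T : H → H}
    (hT : ∀ u v, ‖T u - T v‖ ≤ ‖u - v‖) {ρ α : ℕ → ℝ} {ρlo ρhi abar : ℝ}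
    (hρlo : 0 < ρlo) (hρ : ∀ k, ρlo ≤ ρ k ∧ ρ k ≤ ρhi) (hρhi : ρhi < 1)
    (hα : ∀ k, 0 ≤ α k ∧ α k ≤ abar) (habar : abar < 1) {x y : ℕ → H}
    (hy : ∀ k, y k = x (k + 1) + α k • (x (k + 1) - x k))
    (hx : ∀ k, x (k + 2) = (1 - ρ k) • y k + ρ k • T (y k))
    (hsum : Summable (fun k => α k * ‖x (k + 1) - x k‖ ^ 2)) {p : H} (hp : T p = p) :
    (∃ l, Tendsto (fun k => ‖x k - p‖) atTop (𝓝 l)) ∧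
      Summable (fun k => ‖T (y k) - y k‖ ^ 2) := by
  set c := ρlo * (1 - ρhi)
  have hc : 0 < c := mul_pos hρlo (sub_pos.2 hρhi)
  have hstep : ∀ k, ‖x (k + 2) - p‖ ^ 2 - ‖x (k + 1) - p‖ ^ 2 + c * ‖T (y k) - y k‖ ^ 2 ≤
      α k * (‖x (k + 1) - p‖ ^ 2 - ‖x k - p‖ ^ 2) + 2 * (α k * ‖x (k + 1) - x k‖ ^ 2) := by
    intro k
    obtain ⟨hρlo_k, hρhi_k⟩ := hρ k
    obtain ⟨hα₀, hα₁⟩ := hα k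
    have hone := norm_inertial_averaged_sub_sq_le hT hp (hρlo.trans_le hρlo_k).le (hy k)
    rw [← hx k] at hone
    have hcρ : c ≤ ρ k * (1 - ρ k) :=
      mul_le_mul hρlo_k (by linarith) (by linarith) (by linarith)
    have hα2 : α k * (1 + α k) ≤ 2 * α k := by nlinarith
    nlinarith [sq_nonneg ‖T (y k) - y k‖, sq_nonneg ‖x (k + 1) - x k‖]
  obtain ⟨⟨l, hl⟩, hres⟩ := exists_tendsto_and_summable_of_inertial_le
    (φ := fun k => ‖x k - p‖ ^ 2) (t := fun k => c * ‖T (y k) - y k‖ ^ 2)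
    ⟨0, by rintro _ ⟨k, rfl⟩; positivity⟩ (fun k => by positivity) hα habar
    (fun k => by have := (hα k).1; positivity) (hsum.mul_left 2) hstep
  exact ⟨⟨√l, by simpa using hl.sqrt⟩, by simpa [hc.ne'] using hres.mul_left c⁻¹⟩

theorem WeakTendsto.exists_norm_le [CompleteSpace H] {u : ℕ → H} {z : H}
    (h : WeakTendsto u z) : ∃ M, ∀ n, ‖u n‖ ≤ M := by
  obtain ⟨M, hM⟩ := banach_steinhaus (g := fun n => toDual ℝ H (u n)) fun w => by
    obtain ⟨C, hC⟩ := (h w).norm.bddAbove_range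
    exact ⟨C, fun n => hC ⟨n, rfl⟩⟩
  exact ⟨M, fun n => by simpa using hM n⟩

/-- Sequential Banach–Alaoglu in the separable closed span `K` of the sequence, followed by the
Riesz representation on `K`; vectors orthogonal to `K` do not see the sequence. -/
theorem exists_weakTendsto_subseq [CompleteSpace H] {x : ℕ → H} {M : ℝ} (hM : ∀ n, ‖x n‖ ≤ M) :
    ∃ z φ, StrictMono φ ∧ WeakTendsto (x ∘ φ) z := by
  set K := (Submodule.span ℝ (Set.range x)).topologicalClosure
  have hxK : ∀ n, x n ∈ K :=
    fun n => Submodule.le_topologicalClosure _ (Submodule.subset_span (Set.mem_range_self n))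
  have : TopologicalSpace.SeparableSpace K :=
    (Set.countable_range x).isSeparable.span.closure.separableSpace
  have : CompleteSpace K := (Submodule.isClosed_topologicalClosure _).completeSpace_coe
  obtain ⟨f, -, φ, hφ, hf⟩ := WeakDual.isSeqCompact_closedBall ℝ K 0 M
    (x := fun n => StrongDual.toWeakDual (toDual ℝ K ⟨x n, hxK n⟩))
    fun n => by simpa using hM n
  refine ⟨((toDual ℝ K).symm (WeakDual.toStrongDual f) : H), φ, hφ, fun w => ?_⟩
  have hw : ∀ u ∈ K, inner ℝ u w = inner ℝ u (K.starProjection w) := fun u hu => by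
    rw [← Submodule.inner_starProjection_left_eq_right, K.starProjection_eq_self_iff.mpr hu]
  have := ((WeakDual.eval_continuous (K.orthogonalProjectionOnto w)).tendsto f).comp hf
  simp only [Function.comp_def, hw _ (hxK _), hw _ (Subtype.coe_prop _)]
  rw [Submodule.starProjection_apply, ← Submodule.coe_inner, toDual_symm_apply]
  simp only [Function.comp_def, StrongDual.toWeakDual_apply, toDual_apply_apply,
    Submodule.coe_inner] at this
  exact this

theorem WeakTendsto.map_eq_of_tendsto_norm_sub [CompleteSpace H] {T : H → H}
    (hT : ∀ u v, ‖T u - T v‖ ≤ ‖u - v‖) {u : ℕ → H} {z : H} (hu : WeakTendsto u z)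
    (hres : Tendsto (fun n => ‖T (u n) - u n‖) atTop (𝓝 0)) : T z = z := by
  obtain ⟨M, hM⟩ := hu.exists_norm_le
  set q := z - T z
  set r := fun n => ‖T (u n) - u n‖
  have hbound : ∀ n, ‖q‖ ^ 2 ≤ r n ^ 2 + 2 * r n * (M + ‖z‖) + 2 * inner ℝ (z - u n) q := by
    intro n
    have hexp : ‖u n - T z‖ ^ 2 = ‖u n - z‖ ^ 2 + 2 * inner ℝ (u n - z) q + ‖q‖ ^ 2 := by
      rw [← sub_add_sub_cancel (u n) z (T z), norm_add_sq_real]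
    have htri : ‖u n - T z‖ ≤ r n + ‖u n - z‖ :=
      calc ‖u n - T z‖ ≤ ‖u n - T (u n)‖ + ‖T (u n) - T z‖ :=
            norm_sub_le_norm_sub_add_norm_sub _ _ _
        _ ≤ r n + ‖u n - z‖ := by rw [norm_sub_rev]; gcongr; exact hT _ _
    have hdist : ‖u n - z‖ ≤ M + ‖z‖ := (norm_sub_le _ _).trans (by linarith [hM n])
    have hr : 0 ≤ r n := norm_nonneg _
    rw [← neg_sub (u n) z, inner_neg_left]
    nlinarith [mul_le_mul_of_nonneg_left hdist hr, norm_nonneg (u n - T z),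
      pow_le_pow_left₀ (norm_nonneg _) htri 2]
  have hlim : Tendsto (fun n => r n ^ 2 + 2 * r n * (M + ‖z‖) + 2 * inner ℝ (z - u n) q)
      atTop (𝓝 0) := by
    have hin : Tendsto (fun n => inner ℝ (z - u n) q) atTop (𝓝 0) := by
      simpa [inner_sub_left] using (hu q).const_sub (inner ℝ z q)
    simpa using ((hres.pow 2).add ((hres.const_mul 2).mul_const _)).add (hin.const_mul 2)
  have hq : ‖q‖ ^ 2 ≤ 0 := ge_of_tendsto' hlim hbound
  exact (sub_eq_zero.mp (norm_eq_zero.mp (by nlinarith [norm_nonneg q]))).symm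

theorem WeakTendsto.eq_of_tendsto_norm_sub {x : ℕ → H} {z z' : H} {φ ψ : ℕ → ℕ}
    (hφ : Tendsto φ atTop atTop) (hψ : Tendsto ψ atTop atTop)
    (hz : WeakTendsto (x ∘ φ) z) (hz' : WeakTendsto (x ∘ ψ) z')
    (ha : ∃ a, Tendsto (fun k => ‖x k - z‖) atTop (𝓝 a))
    (hb : ∃ b, Tendsto (fun k => ‖x k - z'‖) atTop (𝓝 b)) : z = z' := by
  obtain ⟨a, ha⟩ := ha
  obtain ⟨b, hb⟩ := hb
  set c := (a ^ 2 - b ^ 2 - ‖z‖ ^ 2 + ‖z'‖ ^ 2) / 2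
  have hpol : ∀ k, inner ℝ (x k) (z' - z) =
      (‖x k - z‖ ^ 2 - ‖x k - z'‖ ^ 2 - ‖z‖ ^ 2 + ‖z'‖ ^ 2) / 2 := by
    intro k
    rw [norm_sub_sq_real, norm_sub_sq_real, inner_sub_right]
    ring
  have hc : Tendsto (fun k => inner ℝ (x k) (z' - z)) atTop (𝓝 c) := by
    simp only [hpol]
    exact ((((ha.pow 2).sub (hb.pow 2)).sub_const _).add_const _).div_const 2
  have h₁ : inner ℝ z (z' - z) = c := tendsto_nhds_unique (hz _) (hc.comp hφ)
  have h₂ : inner ℝ z' (z' - z) = c := tendsto_nhds_unique (hz' _) (hc.comp hψ)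
  have : inner ℝ (z' - z) (z' - z) = (0 : ℝ) := by rw [inner_sub_left, h₁, h₂, sub_self]
  exact (sub_eq_zero.mp (inner_self_eq_zero.mp this)).symm

theorem exists_weakTendsto_of_forall_tendsto_norm_sub [CompleteSpace H] {x : ℕ → H} {S : Set H}
    (hS : S.Nonempty) (hconv : ∀ z ∈ S, ∃ l, Tendsto (fun k => ‖x k - z‖) atTop (𝓝 l))
    (hclust : ∀ z φ, Tendsto φ atTop atTop → WeakTendsto (x ∘ φ) z → z ∈ S) :
    ∃ p ∈ S, WeakTendsto x p := by
  obtain ⟨p₀, hp₀⟩ := hS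
  obtain ⟨M, hM⟩ : ∃ M, ∀ k, ‖x k‖ ≤ M := by
    obtain ⟨l, hl⟩ := hconv p₀ hp₀
    obtain ⟨C, hC⟩ := hl.bddAbove_range
    exact ⟨C + ‖p₀‖, fun k => (norm_le_norm_sub_add _ p₀).trans (by linarith [hC ⟨k, rfl⟩])⟩
  have hsub : ∀ ns : ℕ → ℕ, Tendsto ns atTop atTop →
      ∃ z ∈ S, ∃ ms : ℕ → ℕ, Tendsto ms atTop atTop ∧ WeakTendsto (x ∘ ns ∘ ms) z := by
    intro ns hns
    obtain ⟨z, ms, hms, hz⟩ := exists_weakTendsto_subseq fun k => hM (ns k)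
    exact ⟨z, hclust z _ (hns.comp hms.tendsto_atTop) hz, ms, hms.tendsto_atTop, hz⟩
  obtain ⟨p, hp, ms, hms, hw⟩ := hsub id tendsto_id
  refine ⟨p, hp, fun w => tendsto_of_subseq_tendsto fun ns hns => ?_⟩
  obtain ⟨z, hz, ms', hms', hw'⟩ := hsub ns hns
  have hpz : p = z := WeakTendsto.eq_of_tendsto_norm_sub hms (hns.comp hms') hw hw'
    (hconv p hp) (hconv z hz)
  exact ⟨ms', hpz ▸ hw' w⟩

end HilbertSpace

/-- Here `x 0` plays the role of `x⁻¹` and `x 1` of `x⁰`; `y k, x (k+2)` are the iterates. -/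
theorem inertial_KM_convergence_Mainge
    {H : Type*} [NormedAddCommGroup H] [InnerProductSpace ℝ H] [CompleteSpace H]
    (T : H → H) (hT : ∀ u v, ‖T u - T v‖ ≤ ‖u - v‖)
    (hFix : ∃ p : H, T p = p)
    (ρ α : ℕ → ℝ) (ρlo ρhi abar : ℝ)
    (hρlo : 0 < ρlo) (hρ : ∀ k, ρlo ≤ ρ k ∧ ρ k ≤ ρhi) (hρhi : ρhi < 1)
    (hα : ∀ k, 0 ≤ α k ∧ α k ≤ abar) (habar : abar < 1)
    (x y : ℕ → H)
    (hy : ∀ k, y k = x (k + 1) + α k • (x (k + 1) - x k))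
    (hx : ∀ k, x (k + 2) = (1 - ρ k) • y k + ρ k • T (y k))
    (hsum : Summable (fun k => α k * ‖x (k + 1) - x k‖ ^ 2)) :
    (∀ xstar : H, T xstar = xstar →
        ∃ l : ℝ, Filter.Tendsto (fun k => ‖x k - xstar‖) Filter.atTop (nhds l)) ∧
    ∃ p : H, T p = p ∧ WeakTendsto x p := by
  have hfejer := fun z (hz : T z = z) =>
    inertialKM_tendsto_norm_sub_and_summable hT hρlo hρ hρhi hα habar hy hx hsum hz
  refine ⟨fun z hz => (hfejer z hz).1, ?_⟩
  obtain ⟨p₀, hp₀⟩ := hFix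
  have hresy : Tendsto (fun k => ‖T (y k) - y k‖) atTop (𝓝 0) := by
    simpa using (hfejer p₀ hp₀).2.tendsto_atTop_zero.sqrt
  have hresx : Tendsto (fun k => ‖T (x k) - x k‖) atTop (𝓝 0) := by
    refine (tendsto_add_atTop_iff_nat 2).mp
      (squeeze_zero (fun _ => norm_nonneg _) (fun k => ?_) hresy)
    rw [hx k]
    exact norm_map_averaged_sub_averaged_le hT (hρlo.trans_le (hρ k).1).le
      ((hρ k).2.trans hρhi.le) (y k)
  exact exists_weakTendsto_of_forall_tendsto_norm_sub (S := {z | T z = z}) ⟨p₀, hp₀⟩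
    (fun z hz => (hfejer z hz).1) fun z φ hφ hz =>
      hz.map_eq_of_tendsto_norm_sub hT (hresx.comp hφ)
end

section
/- Let A, B : H → H be maximally monotone (possibly set-valued), C : H → H β-cocoercive, γ > 0, and define T = J_{γB} composed suitably: T = I - J_{γB} + J_{γA}(2J_{γB} - I - γC∘J_{γB}). Then zer(A + B + C) = J_{γB}(Fix(T)). -/
/-!
Write `x = J_{γB} z` and `u = 2x - z - γ C x`. The fixed-point equation `T z = z` says exactly
`J_{γA} u = x`, and the resolvent relations then give `(u - x)/γ ∈ A x` and `(z - x)/γ ∈ B x`,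
whose sum with `C x` vanishes. Conversely, if `a + b + C x = 0` with `a ∈ A x`, `b ∈ B x`, then
`z = x + γ b` is a fixed point with `J_{γB} z = x`: on the graph of a monotone operator the
resolvent is forced to invert `I + γ A`, so `J_{γB} z = x` and `J_{γA} u = J_{γA} (x + γ a) = x`.
-/

/-- A set-valued operator is maximally monotone. -/
def IsMaximalMonotone {H : Type*} [NormedAddCommGroup H] [InnerProductSpace ℝ H]
    (A : H → Set H) : Prop :=
  (∀ x y u v, u ∈ A x → v ∈ A y → 0 ≤ (inner ℝ (x - y) (u - v) : ℝ)) ∧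
  (∀ x u, (∀ y v, v ∈ A y → 0 ≤ (inner ℝ (x - y) (u - v) : ℝ)) → u ∈ A x)

section

variable {H : Type*} [NormedAddCommGroup H] [InnerProductSpace ℝ H]

def IsMonotoneOperator (A : H → Set H) : Prop :=
  ∀ x y u v, u ∈ A x → v ∈ A y → 0 ≤ (inner ℝ (x - y) (u - v) : ℝ)

/- Monotonicity tested on `a ∈ A x` and the resolvent pair at `J (x + γ • a)` gives
`-γ⁻¹ ‖x - J (x + γ • a)‖² ≥ 0`. -/
theorem resolvent_add_smul_eq_of_mem {A : H → Set H} (hmono : IsMonotoneOperator A)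
    {γ : ℝ} (hγ : 0 < γ) {J : H → H} (hJ : ∀ u, γ⁻¹ • (u - J u) ∈ A (J u))
    {x a : H} (ha : a ∈ A x) : J (x + γ • a) = x := by
  set y := J (x + γ • a)
  have hdiff : a - γ⁻¹ • (x + γ • a - y) = -γ⁻¹ • (x - y) := by
    rw [smul_sub, smul_add, smul_smul, inv_mul_cancel₀ hγ.ne', one_smul, neg_smul, smul_sub]
    abel
  have hle : γ⁻¹ * ‖x - y‖ ^ 2 ≤ 0 := by
    have := hmono x y _ _ ha (hJ (x + γ • a))
    rwa [hdiff, inner_smul_right, real_inner_self_eq_norm_sq, neg_mul, neg_nonneg] at this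
  have hxy : ‖x - y‖ = 0 :=
    pow_eq_zero_iff two_ne_zero |>.mp <|
      le_antisymm (nonpos_of_mul_nonpos_right hle (inv_pos.mpr hγ)) (sq_nonneg _)
  exact (sub_eq_zero.mp (norm_eq_zero.mp hxy)).symm

theorem davisYin_apply_eq_self_iff {C JA JB T : H → H} {γ : ℝ}
    (hT : ∀ z, T z = z - JB z + JA ((2 : ℝ) • JB z - z - γ • C (JB z))) (z : H) :
    T z = z ↔ JA ((2 : ℝ) • JB z - z - γ • C (JB z)) = JB z := by
  rw [hT, sub_add_eq_add_sub, sub_eq_iff_eq_add, add_left_cancel_iff]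

theorem davisYin_fixedPoint_of_mem_zeros {A B : H → Set H}
    (hA : IsMonotoneOperator A) (hB : IsMonotoneOperator B)
    {C : H → H} {γ : ℝ} (hγ : 0 < γ) {JA JB T : H → H}
    (hJA : ∀ u, γ⁻¹ • (u - JA u) ∈ A (JA u)) (hJB : ∀ u, γ⁻¹ • (u - JB u) ∈ B (JB u))
    (hT : ∀ z, T z = z - JB z + JA ((2 : ℝ) • JB z - z - γ • C (JB z)))
    {x a b : H} (ha : a ∈ A x) (hb : b ∈ B x) (hsum : a + b + C x = 0) :
    T (x + γ • b) = x + γ • b := by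
  have hJB_eq : JB (x + γ • b) = x := resolvent_add_smul_eq_of_mem hB hγ hJB hb
  have hreflect : (2 : ℝ) • x - (x + γ • b) - γ • C x = x + γ • a := by
    linear_combination (norm := module) -γ • hsum
  rw [davisYin_apply_eq_self_iff hT, hJB_eq, hreflect]
  exact resolvent_add_smul_eq_of_mem hA hγ hJA ha

theorem davisYin_mem_zeros_of_fixedPoint {A B : H → Set H} {C : H → H} {γ : ℝ} (hγ : 0 < γ)
    {JA JB T : H → H}
    (hJA : ∀ u, γ⁻¹ • (u - JA u) ∈ A (JA u)) (hJB : ∀ u, γ⁻¹ • (u - JB u) ∈ B (JB u))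
    (hT : ∀ z, T z = z - JB z + JA ((2 : ℝ) • JB z - z - γ • C (JB z)))
    {z : H} (hz : T z = z) :
    ∃ a ∈ A (JB z), ∃ b ∈ B (JB z), a + b + C (JB z) = 0 := by
  set u := (2 : ℝ) • JB z - z - γ • C (JB z)
  have hJA_eq : JA u = JB z := (davisYin_apply_eq_self_iff hT z).mp hz
  refine ⟨γ⁻¹ • (u - JB z), hJA_eq ▸ hJA u, γ⁻¹ • (z - JB z), hJB z, ?_⟩
  rw [← smul_add, show u - JB z + (z - JB z) = -(γ • C (JB z)) by simp only [u]; module,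
    smul_neg, smul_smul, inv_mul_cancel₀ hγ.ne', one_smul, neg_add_cancel]

end

theorem davis_yin_zeros_eq_image_of_fixedPoints_general
    {H : Type*} [NormedAddCommGroup H] [InnerProductSpace ℝ H]
    (A B : H → Set H) (hA : IsMaximalMonotone A) (hB : IsMaximalMonotone B)
    (C : H → H)
    (γ : ℝ) (hγ : 0 < γ)
    (JA JB : H → H)
    (hJA : ∀ u : H, γ⁻¹ • (u - JA u) ∈ A (JA u))
    (hJB : ∀ u : H, γ⁻¹ • (u - JB u) ∈ B (JB u))
    (T : H → H)
    (hT : ∀ z : H, T z = z - JB z + JA ((2 : ℝ) • JB z - z - γ • C (JB z))) :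
    {x : H | ∃ a ∈ A x, ∃ b ∈ B x, a + b + C x = 0} = JB '' {z : H | T z = z} := by
  ext x
  constructor
  · rintro ⟨a, ha, b, hb, hsum⟩
    exact ⟨x + γ • b, davisYin_fixedPoint_of_mem_zeros hA.1 hB.1 hγ hJA hJB hT ha hb hsum,
      resolvent_add_smul_eq_of_mem hB.1 hγ hJB hb⟩
  · rintro ⟨z, hz, rfl⟩
    exact davisYin_mem_zeros_of_fixedPoint hγ hJA hJB hT hz

/-- Davis–Yin: zer(A+B+C) = J_{γB}(Fix T) where
`T = I - J_{γB} + J_{γA}∘(2 J_{γB} - I - γ C ∘ J_{γB})`.  The resolvents are given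
as functions `JA, JB` characterized by the resolvent relation. -/
theorem davis_yin_zeros_eq_image_of_fixedPoints
    {H : Type*} [NormedAddCommGroup H] [InnerProductSpace ℝ H]
    (A B : H → Set H) (hA : IsMaximalMonotone A) (hB : IsMaximalMonotone B)
    (C : H → H) (β : ℝ) (hβ : 0 < β)
    (hC : ∀ x y : H, β * ‖C x - C y‖ ^ 2 ≤ (inner ℝ (x - y) (C x - C y) : ℝ))
    (γ : ℝ) (hγ : 0 < γ)
    (JA JB : H → H)
    (hJA : ∀ u : H, γ⁻¹ • (u - JA u) ∈ A (JA u))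
    (hJB : ∀ u : H, γ⁻¹ • (u - JB u) ∈ B (JB u))
    (T : H → H)
    (hT : ∀ z : H, T z = z - JB z + JA ((2 : ℝ) • JB z - z - γ • C (JB z))) :
    {x : H | ∃ a ∈ A x, ∃ b ∈ B x, a + b + C x = 0} = JB '' {z : H | T z = z} :=
  davis_yin_zeros_eq_image_of_fixedPoints_general A B hA hB C γ hγ JA JB hJA hJB T hT
end

section
/- Let A, B : H → 2^H be maximally monotone, C : H → H β-cocoercive, γ > 0, and T = I - J_{γB} + J_{γA}(2J_{γB} - I - γC∘J_{γB}). Then Fix(T) = {x + γμ : 0 ∈ (A+B+C)x, μ ∈ (Bx) ∩ (-Ax - Cx)}. -/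
/-!
A point `z` is fixed by `T` exactly when `J_{γA}` sends the reflected point
`2 J_{γB} z - z - γ C (J_{γB} z)` to `x = J_{γB} z`. Writing `z = x + γ μ`, the resolvent
inclusions say `μ ∈ B x` and `-μ - C x ∈ A x`; adding them gives `0 ∈ (A + B + C) x`.
Conversely, monotonicity makes resolvent points unique, so these inclusions force
`J_{γB} z = x` and `J_{γA}(…) = x`.
-/

open RealInnerProductSpace

section Resolvent

variable {H : Type*} [NormedAddCommGroup H] [InnerProductSpace ℝ H]

lemma eq_of_inv_smul_sub_mem_of_monotone {M : H → Set H}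
    (hM : ∀ x y u v, u ∈ M x → v ∈ M y → 0 ≤ ⟪x - y, u - v⟫)
    {γ : ℝ} (hγ : 0 < γ) {u p q : H}
    (hp : γ⁻¹ • (u - p) ∈ M p) (hq : γ⁻¹ • (u - q) ∈ M q) : p = q := by
  have hmono := hM p q _ _ hp hq
  have hdiff : γ⁻¹ • (u - p) - γ⁻¹ • (u - q) = -(γ⁻¹ • (p - q)) := by
    rw [← smul_sub, ← smul_neg]; congr 1; abel
  rw [hdiff, inner_neg_right, real_inner_smul_right, real_inner_self_eq_norm_sq] at hmono
  have hnorm : ‖p - q‖ ^ 2 ≤ 0 := by nlinarith [inv_pos.mpr hγ]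
  rw [← sub_eq_zero, ← norm_eq_zero]
  exact pow_eq_zero_iff two_ne_zero |>.mp (le_antisymm hnorm (sq_nonneg _))

lemma resolvent_eq_iff_of_monotone {M : H → Set H}
    (hM : ∀ x y u v, u ∈ M x → v ∈ M y → 0 ≤ ⟪x - y, u - v⟫)
    {γ : ℝ} (hγ : 0 < γ) {J : H → H} (hJ : ∀ u, γ⁻¹ • (u - J u) ∈ M (J u)) (u p : H) :
    J u = p ↔ γ⁻¹ • (u - p) ∈ M p :=
  ⟨fun h => h ▸ hJ u, eq_of_inv_smul_sub_mem_of_monotone hM hγ (hJ u)⟩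

end Resolvent

lemma inv_smul_sub_eq_iff_eq_add_smul {H : Type*} [AddCommGroup H] [Module ℝ H]
    {γ : ℝ} (hγ : γ ≠ 0) (z x μ : H) : γ⁻¹ • (z - x) = μ ↔ z = x + γ • μ := by
  rw [inv_smul_eq_iff₀ hγ, sub_eq_iff_eq_add']

lemma inv_smul_reflection_sub {H : Type*} [AddCommGroup H] [Module ℝ H]
    {γ : ℝ} (hγ : γ ≠ 0) (x μ c : H) :
    γ⁻¹ • ((2 : ℝ) • x - (x + γ • μ) - γ • c - x) = -μ - c := by
  match_scalars
  · field_simp; ring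
  · field_simp
  · field_simp

lemma sub_add_eq_self_iff {G : Type*} [AddCommGroup G] (z w v : G) :
    z - w + v = z ↔ v = w := by
  rw [sub_add_eq_add_sub, sub_eq_iff_eq_add, add_right_inj]

theorem davis_yin_fixedPoints_characterization_general
    {H : Type*} [NormedAddCommGroup H] [InnerProductSpace ℝ H]
    (A B : H → Set H) (hA : IsMaximalMonotone A) (hB : IsMaximalMonotone B)
    (C : H → H)
    (γ : ℝ) (hγ : 0 < γ)
    (JA JB : H → H)
    (hJA : ∀ u : H, γ⁻¹ • (u - JA u) ∈ A (JA u))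
    (hJB : ∀ u : H, γ⁻¹ • (u - JB u) ∈ B (JB u))
    (T : H → H)
    (hT : ∀ z : H, T z = z - JB z + JA ((2 : ℝ) • JB z - z - γ • C (JB z))) :
    {z : H | T z = z} =
      {z : H | ∃ x μ : H, z = x + γ • μ ∧
        (∃ a ∈ A x, ∃ b ∈ B x, a + b + C x = 0) ∧
        μ ∈ B x ∧ (∃ a ∈ A x, μ = -a - C x)} := by
  have hJA_iff := resolvent_eq_iff_of_monotone hA.1 hγ hJA
  have hJB_iff := resolvent_eq_iff_of_monotone hB.1 hγ hJB
  ext z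
  simp only [Set.mem_ofPred_eq, hT, sub_add_eq_self_iff]
  constructor
  · intro hfix
    obtain ⟨μ, hμ, hz⟩ : ∃ μ, μ ∈ B (JB z) ∧ z = JB z + γ • μ :=
      ⟨_, hJB z, (inv_smul_sub_eq_iff_eq_add_smul hγ.ne' _ _ _).mp rfl⟩
    have ha : -μ - C (JB z) ∈ A (JB z) := by
      rw [← inv_smul_reflection_sub hγ.ne' (JB z) μ (C (JB z)), ← hz]
      exact (hJA_iff _ _).mp hfix
    exact ⟨JB z, μ, hz, ⟨_, ha, μ, hμ, by abel⟩, hμ, _, ha, by abel⟩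
  · rintro ⟨x, μ, rfl, -, hμ, a, ha, rfl⟩
    have hJBx : JB (x + γ • (-a - C x)) = x :=
      (hJB_iff _ _).mpr <| by
        rwa [(inv_smul_sub_eq_iff_eq_add_smul hγ.ne' _ x (-a - C x)).mpr rfl]
    rw [hJBx, hJA_iff, inv_smul_reflection_sub hγ.ne']
    simpa using ha

/-- Davis–Yin: characterization of the fixed point set of
`T = I - J_{γB} + J_{γA}∘(2 J_{γB} - I - γ C ∘ J_{γB})`. -/
theorem davis_yin_fixedPoints_characterization
    {H : Type*} [NormedAddCommGroup H] [InnerProductSpace ℝ H]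
    (A B : H → Set H) (hA : IsMaximalMonotone A) (hB : IsMaximalMonotone B)
    (C : H → H) (β : ℝ) (hβ : 0 < β)
    (hC : ∀ x y : H, β * ‖C x - C y‖ ^ 2 ≤ (inner ℝ (x - y) (C x - C y) : ℝ))
    (γ : ℝ) (hγ : 0 < γ)
    (JA JB : H → H)
    (hJA : ∀ u : H, γ⁻¹ • (u - JA u) ∈ A (JA u))
    (hJB : ∀ u : H, γ⁻¹ • (u - JB u) ∈ B (JB u))
    (T : H → H)
    (hT : ∀ z : H, T z = z - JB z + JA ((2 : ℝ) • JB z - z - γ • C (JB z))) :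
    {z : H | T z = z} =
      {z : H | ∃ x μ : H, z = x + γ • μ ∧
        (∃ a ∈ A x, ∃ b ∈ B x, a + b + C x = 0) ∧
        μ ∈ B x ∧ (∃ a ∈ A x, μ = -a - C x)} :=
  davis_yin_fixedPoints_characterization_general A B hA hB C γ hγ JA JB hJA hJB T hT
end

section
/- Let h : H → ℝ be convex and Fréchet differentiable with (1/β)-Lipschitz continuous gradient. Then ∇h is β-cocoercive: ⟨x - y, ∇h(x) - ∇h(y)⟩ ≥ β‖∇h(x) - ∇h(y)‖² for all x, y ∈ H (Baillon–Haddad theorem). -/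
/-!
Let `g` be the gradient of `h`. Convexity gives `h z ≥ h x + ⟪g x, z - x⟫`, and the Lipschitz
bound on `g` gives the descent lemma `h z ≤ h y + ⟪g y, z - y⟫ + ‖z - y‖² / (2β)`. Comparing
both at the gradient step `z = y - β (g y - g x)` yields
`h y ≥ h x + ⟪g x, y - x⟫ + (β / 2) ‖g y - g x‖²`; adding this to the same inequality with `x`
and `y` exchanged gives cocoercivity.
-/

open Set

section

variable {H : Type*} [NormedAddCommGroup H] [InnerProductSpace ℝ H] [CompleteSpace H]
  {f : H → ℝ} {g : H → H}

theorem HasGradientAt.hasDerivAt_comp_add_smul {f' x v : H} {t : ℝ}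
    (hf : HasGradientAt f f' (x + t • v)) :
    HasDerivAt (fun s : ℝ => f (x + s • v)) (inner ℝ f' v) t := by
  have hline : HasDerivAt (fun s : ℝ => x + s • v) v t := by
    simpa using ((hasDerivAt_id t).smul_const v).const_add x
  have := (hasGradientAt_iff_hasFDerivAt.mp hf).comp_hasDerivAt t hline
  rwa [InnerProductSpace.toDual_apply_apply] at this

theorem ConvexOn.inner_gradient_le_sub {f' x : H} (hf : ConvexOn ℝ univ f)
    (hf' : HasGradientAt f f' x) (y : H) :
    inner ℝ f' (y - x) ≤ f y - f x := by
  have hline : ConvexOn ℝ univ (fun t : ℝ => f (x + t • (y - x))) := by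
    simpa [Function.comp_def, AffineMap.lineMap_apply, add_comm]
      using hf.comp_affineMap (AffineMap.lineMap x y)
  have hderiv : HasDerivAt (fun t : ℝ => f (x + t • (y - x))) (inner ℝ f' (y - x)) 0 :=
    HasGradientAt.hasDerivAt_comp_add_smul (by simpa using hf')
  simpa [slope_def_field] using
    hline.le_slope_of_hasDerivAt (mem_univ 0) (mem_univ 1) one_pos hderiv

theorem le_add_inner_gradient_add_sq_norm {L : ℝ} (hf : ∀ x, HasGradientAt f (g x) x)
    (hg : ∀ x y, ‖g x - g y‖ ≤ L * ‖x - y‖) (x y : H) :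
    f y ≤ f x + inner ℝ (g x) (y - x) + L / 2 * ‖y - x‖ ^ 2 := by
  set v := y - x
  have hderiv (t : ℝ) : HasDerivAt (fun s : ℝ => f (x + s • v)) (inner ℝ (g (x + t • v)) v) t :=
    (hf _).hasDerivAt_comp_add_smul
  have hparabola (t : ℝ) :
      HasDerivAt (fun s : ℝ => f x + s * inner ℝ (g x) v + L / 2 * s ^ 2 * ‖v‖ ^ 2)
        (inner ℝ (g x) v + L * t * ‖v‖ ^ 2) t := by
    refine ((((hasDerivAt_id t).mul_const (inner ℝ (g x) v)).const_add (f x)).add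
      (((hasDerivAt_pow 2 t).const_mul (L / 2)).mul_const (‖v‖ ^ 2))).congr_deriv ?_
    ring
  have hderiv_le {t : ℝ} (ht : 0 ≤ t) :
      inner ℝ (g (x + t • v)) v ≤ inner ℝ (g x) v + L * t * ‖v‖ ^ 2 := by
    have hcs : inner ℝ (g (x + t • v) - g x) v ≤ L * t * ‖v‖ ^ 2 :=
      calc inner ℝ (g (x + t • v) - g x) v
          ≤ ‖g (x + t • v) - g x‖ * ‖v‖ := real_inner_le_norm _ _
        _ ≤ L * ‖x + t • v - x‖ * ‖v‖ := by gcongr; exact hg _ _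
        _ = L * t * ‖v‖ ^ 2 := by
          rw [add_sub_cancel_left, norm_smul, Real.norm_of_nonneg ht]; ring
    rwa [inner_sub_left, sub_le_iff_le_add'] at hcs
  have := image_le_of_deriv_right_le_deriv_boundary
    (fun t _ => (hderiv t).continuousAt.continuousWithinAt)
    (fun t _ => (hderiv t).hasDerivWithinAt) (by simp)
    (fun t _ => (hparabola t).continuousAt.continuousWithinAt)
    (fun t _ => (hparabola t).hasDerivWithinAt) (fun t ht => hderiv_le ht.1)
    (right_mem_Icc.mpr zero_le_one)
  simpa [v] using this

theorem ConvexOn.add_inner_gradient_add_sq_norm_le {β : ℝ} (hβ : 0 < β)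
    (hconv : ConvexOn ℝ univ f) (hf : ∀ x, HasGradientAt f (g x) x)
    (hg : ∀ x y, ‖g x - g y‖ ≤ (1 / β) * ‖x - y‖) (x y : H) :
    f x + inner ℝ (g x) (y - x) + β / 2 * ‖g y - g x‖ ^ 2 ≤ f y := by
  set d := g y - g x
  set z := y - β • d
  have hbelow := hconv.inner_gradient_le_sub (hf x) z
  have habove := le_add_inner_gradient_add_sq_norm hf hg y z
  have hzx : z - x = (y - x) - β • d := by simp only [z]; abel
  have hzy : z - y = -(β • d) := by simp only [z]; abel
  have hd : inner ℝ (g y) d - inner ℝ (g x) d = ‖d‖ ^ 2 := by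
    rw [← inner_sub_left, real_inner_self_eq_norm_sq]
  rw [hzx, inner_sub_right, real_inner_smul_right] at hbelow
  rw [hzy, inner_neg_right, real_inner_smul_right, norm_neg, norm_smul,
    Real.norm_of_nonneg hβ.le] at habove
  have hcoef : 1 / β / 2 * (β * ‖d‖) ^ 2 = β / 2 * ‖d‖ ^ 2 := by field_simp
  linear_combination hbelow + habove - β * hd + hcoef

end

/-- Baillon–Haddad theorem: a convex differentiable function with (1/β)-Lipschitz
gradient has a β-cocoercive gradient. -/
theorem baillon_haddad
    {H : Type*} [NormedAddCommGroup H] [InnerProductSpace ℝ H] [CompleteSpace H]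
    (h : H → ℝ) (h' : H → H) (β : ℝ) (hβ : 0 < β)
    (hconv : ConvexOn ℝ Set.univ h)
    (hdiff : ∀ x : H, HasGradientAt h (h' x) x)
    (hlip : ∀ x y : H, ‖h' x - h' y‖ ≤ (1 / β) * ‖x - y‖) :
    ∀ x y : H, β * ‖h' x - h' y‖ ^ 2 ≤ (inner ℝ (x - y) (h' x - h' y) : ℝ) := by
  intro x y
  have hxy := hconv.add_inner_gradient_add_sq_norm_le hβ hdiff hlip x y
  have hyx := hconv.add_inner_gradient_add_sq_norm_le hβ hdiff hlip y x
  have hinner : inner ℝ (h' x) (y - x) + inner ℝ (h' y) (x - y)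
      = -inner ℝ (x - y) (h' x - h' y) := by
    rw [← neg_sub x y, inner_neg_right, inner_sub_right (x - y), real_inner_comm (h' x),
      real_inner_comm (h' y)]
    ring
  rw [norm_sub_rev (h' y)] at hxy
  linarith
end
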